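/- Let V(x) = R_y(−x) and |ψ⟩ = R_y(π/2)|0⟩. With |Ψ_f'⟩ = Σ_{j⃗} p(j⃗)|j⃗⟩ ⊗ V(x_{n,j_n})⋯V(x_{1,j_1})|ψ⟩ and a' = ‖(I⊗|1⟩⟨1|)|Ψ_f'⟩‖², one has E[sin(S_n)] = 1 − 2a'. -/

import Mathlib

open Matrix

/-- The single-qubit rotation `R_y(x) = cos(x/2) I - i sin(x/2) σ_y`. -/
noncomputable def Ry (x : ℝ) : Matrix (Fin 2) (Fin 2) ℂ :=
  !![(Real.cos (x / 2) : ℂ), -(Real.sin (x / 2) : ℂ);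
     (Real.sin (x / 2) : ℂ), (Real.cos (x / 2) : ℂ)]

/-- The computational basis state `|0⟩`. -/
def ket0 : Fin 2 → ℂ := ![1, 0]

/-! Rotations about the `y`-axis compose additively, so along every path `j` the circuit acts on
`|0⟩` as the single rotation `R_y(π/2 - S_j)`, where `S_j = ∑ₗ x_{l, jₗ}`. Its `|1⟩`-amplitude is
`sin((π/2 - S_j)/2)`, whose square is `(1 - sin S_j)/2`; weighting by `p(j)²` and summing gives
`a' = (1 - E[sin S_n])/2`. -/

theorem Ry_mul_Ry (a b : ℝ) : Ry a * Ry b = Ry (a + b) := by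
  ext i j
  fin_cases i <;> fin_cases j <;>
    simp [Ry, Matrix.mul_apply, add_div, Real.cos_add, Real.sin_add] <;> ring

theorem Ry_zero : Ry 0 = 1 := by
  ext i j
  fin_cases i <;> fin_cases j <;> simp [Ry]

theorem prod_map_Ry (L : List ℝ) : (L.map Ry).prod = Ry L.sum := by
  induction L with
  | nil => exact Ry_zero.symm
  | cons a L ih => rw [List.map_cons, List.prod_cons, ih, Ry_mul_Ry, List.sum_cons]

theorem prod_reverse_ofFn_Ry {n : ℕ} (θ : Fin n → ℝ) :
    (List.ofFn fun l => Ry (θ l)).reverse.prod = Ry (∑ l, θ l) := by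
  have h : (List.ofFn fun l => Ry (θ l)) = (List.ofFn θ).map Ry := by rw [List.map_ofFn]; rfl
  rw [h, ← List.map_reverse, prod_map_Ry, List.sum_reverse, List.sum_ofFn]

theorem Ry_mulVec_ket0 (θ : ℝ) :
    Ry θ *ᵥ ket0 = ![(Real.cos (θ / 2) : ℂ), (Real.sin (θ / 2) : ℂ)] := by
  ext i
  fin_cases i <;> simp [Ry, ket0, Matrix.mulVec, dotProduct]

theorem Real.sin_sq_pi_div_two_sub_half (s : ℝ) :
    Real.sin ((Real.pi / 2 - s) / 2) ^ 2 = (1 - Real.sin s) / 2 := by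
  rw [Real.sin_sq_eq_half_sub, show 2 * ((Real.pi / 2 - s) / 2) = Real.pi / 2 - s by ring,
    Real.cos_pi_div_two_sub]
  ring

theorem norm_sq_Ry_mulVec_Ry_pi_div_two_ket0_one (s : ℝ) :
    ‖(Ry (-s) *ᵥ (Ry (Real.pi / 2) *ᵥ ket0)) 1‖ ^ 2 = (1 - Real.sin s) / 2 := by
  rw [mulVec_mulVec, Ry_mul_Ry, Ry_mulVec_ket0, neg_add_eq_sub]
  simp only [Matrix.cons_val_one, Matrix.cons_val_zero]
  rw [Complex.norm_real, Real.norm_eq_abs, sq_abs, Real.sin_sq_pi_div_two_sub_half]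

/-- with `V(x) = R_y(-x)` and input `|ψ⟩ = R_y(π/2)|0⟩`, the amplitude
`a' = ‖(I ⊗ |1⟩⟨1|)|Ψ_f'⟩‖²` satisfies `E[sin S_n] = 1 - 2a'`. -/
theorem amplitude_estimation_sin
    (n k : ℕ)
    (x : Fin n → Fin k → ℝ)
    (p : (Fin n → Fin k) → ℝ)
    (hp : ∑ j : Fin n → Fin k, (p j) ^ 2 = 1)
    (Ψf : (Fin n → Fin k) × Fin 2 → ℂ)
    (hΨf : ∀ j a, Ψf (j, a) =
      (p j : ℂ) *
        (((List.ofFn fun l : Fin n => Ry (-(x l (j l)))).reverse.prod)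
          *ᵥ (Ry (Real.pi / 2) *ᵥ ket0)) a) :
    ∑ j : Fin n → Fin k, (p j) ^ 2 * Real.sin (∑ l : Fin n, x l (j l))
      = 1 - 2 * ∑ j : Fin n → Fin k, ‖Ψf (j, 1)‖ ^ 2 := by
  have path_weight (j : Fin n → Fin k) :
      ‖Ψf (j, 1)‖ ^ 2 = (p j) ^ 2 / 2 - (p j) ^ 2 * Real.sin (∑ l, x l (j l)) / 2 := by
    rw [hΨf, prod_reverse_ofFn_Ry, Finset.sum_neg_distrib, norm_mul, mul_pow,
      norm_sq_Ry_mulVec_Ry_pi_div_two_ket0_one, Complex.norm_real, Real.norm_eq_abs, sq_abs]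
    ring
  simp only [path_weight, Finset.sum_sub_distrib, ← Finset.sum_div, hp]
  ring
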